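/- (Specificity of multi-method dispatch, abstract version) Let O be a finite set of branches, each branch given by a signature (a sequence of argument types) and a return type. Suppose O satisfies: (covariance) for any two branches with signatures Ī <: J̄, the return types satisfy I₀ <: J₀; and (completeness) for any two branches with signatures Ī and J̄ that have a common lower bound, there is a branch in O whose signature is the maximal lower bound of Ī and J̄. Then for any argument type sequence C̄ for which at least one applicable branch exists (a branch whose signature B̄ satisfies C̄ <: B̄), the set of applicable branches has a unique minimal element with respect to pointwise subtyping of signatures. -/

import Mathlib

/-! Take an applicable branch `b` whose signature is minimal among the applicable ones. For any
other applicable branch `b'`, completeness supplies a branch `m` whose signature is a maximal lower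
bound of `b.sig` and `b'.sig`. Single inheritance makes the two signatures comparable in every
coordinate above `Cs`, so their pointwise minimum is a greatest lower bound lying above `Cs`; the
maximal lower bound `m.sig` must coincide with it. Hence `m` is applicable, and minimality of `b`
forces `b.sig = m.sig ≤ b'.sig`. Uniqueness of the signature is antisymmetry, and covariance then
pins down the return type. -/

/-- Single inheritance: the up-set of any class is linearly ordered by `≤`. -/
def SingleInheritance (α : Type*) [PartialOrder α] : Prop :=
  ∀ c a b : α, c ≤ a → c ≤ b → a ≤ b ∨ b ≤ a

/-- `K` is a maximal lower bound of `A` and `B`. -/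
def MaximalLowerBound {β : Type*} [PartialOrder β] (K A B : β) : Prop :=
  K ≤ A ∧ K ≤ B ∧ ∀ K', K ≤ K' → K' ≤ A → K' ≤ B → K' = K

/-- A branch: a signature (sequence of argument types) and a return type. -/
structure Branch (α : Type*) (n : ℕ) where
  sig : Fin n → α
  ret : α

theorem MaximalLowerBound.eq_of_isGLB {β : Type*} [PartialOrder β] {K G A B : β}
    (hK : MaximalLowerBound K A B) (hG : IsGLB {A, B} G) : K = G :=
  (hK.2.2 G (hG.2 (by simp [hK.1, hK.2.1])) (hG.1 (by simp)) (hG.1 (by simp))).symm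

theorem isGLB_pair_of_le {α : Type*} [PartialOrder α] {a b : α} (h : a ≤ b) : IsGLB {a, b} a :=
  ⟨by simp [h], fun _ hx => hx (Set.mem_insert a {b})⟩

namespace SingleInheritance

variable {α : Type*} [PartialOrder α]

theorem exists_isGLB_pair (hSI : SingleInheritance α) {c a b : α} (ha : c ≤ a) (hb : c ≤ b) :
    ∃ g, c ≤ g ∧ IsGLB {a, b} g := by
  rcases hSI c a b ha hb with hab | hba
  · exact ⟨a, ha, isGLB_pair_of_le hab⟩
  · exact ⟨b, hb, Set.pair_comm a b ▸ isGLB_pair_of_le hba⟩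

theorem exists_isGLB_pair_pi {ι : Type*} (hSI : SingleInheritance α) {C A B : ι → α}
    (hA : C ≤ A) (hB : C ≤ B) : ∃ G, C ≤ G ∧ IsGLB {A, B} G := by
  choose G hCG hG using fun i => hSI.exists_isGLB_pair (hA i) (hB i)
  refine ⟨G, hCG, isGLB_pi.2 fun i => ?_⟩
  simpa only [Set.image_pair] using hG i

theorem le_of_maximalLowerBound {ι : Type*} (hSI : SingleInheritance α) {C K A B : ι → α}
    (hA : C ≤ A) (hB : C ≤ B) (hK : MaximalLowerBound K A B) : C ≤ K := by
  obtain ⟨G, hCG, hG⟩ := hSI.exists_isGLB_pair_pi hA hB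
  exact hK.eq_of_isGLB hG ▸ hCG

end SingleInheritance

attribute [ext] Branch

namespace Branch

variable {α : Type*} [PartialOrder α] {n : ℕ} {O : Finset (Branch α n)}

theorem eq_of_sig_eq (hcov : ∀ b₁ ∈ O, ∀ b₂ ∈ O, b₁.sig ≤ b₂.sig → b₁.ret ≤ b₂.ret)
    {b b' : Branch α n} (hb : b ∈ O) (hb' : b' ∈ O) (h : b.sig = b'.sig) : b = b' :=
  Branch.ext h (le_antisymm (hcov b hb b' hb' h.le) (hcov b' hb' b hb h.ge))

theorem exists_minimalFor_applicable {C : Fin n → α} (happ : ∃ b ∈ O, C ≤ b.sig) :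
    ∃ b, MinimalFor (fun b => b ∈ O ∧ C ≤ b.sig) Branch.sig b :=
  Set.Finite.exists_minimalFor Branch.sig {b | b ∈ O ∧ C ≤ b.sig}
    (O.finite_toSet.subset fun _ hb => hb.1) happ

theorem sig_le_of_minimalFor_applicable (hSI : SingleInheritance α)
    (hcomp : ∀ b₁ ∈ O, ∀ b₂ ∈ O, (∃ L, L ≤ b₁.sig ∧ L ≤ b₂.sig) →
      ∃ b ∈ O, MaximalLowerBound b.sig b₁.sig b₂.sig)
    {C : Fin n → α} {b : Branch α n} (hb : MinimalFor (fun b => b ∈ O ∧ C ≤ b.sig) Branch.sig b)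
    {b' : Branch α n} (hb'O : b' ∈ O) (hb'C : C ≤ b'.sig) : b.sig ≤ b'.sig := by
  obtain ⟨⟨hbO, hbC⟩, hbmin⟩ := hb
  obtain ⟨m, hmO, hm⟩ := hcomp b hbO b' hb'O ⟨C, hbC, hb'C⟩
  have hCm : C ≤ m.sig := hSI.le_of_maximalLowerBound hbC hb'C hm
  exact (hbmin ⟨hmO, hCm⟩ hm.1).trans hm.2.1

end Branch

/-- Specificity of multi-method dispatch (abstract version): given covariance and
completeness of the finite branch set `O`, any argument type sequence with at
least one applicable branch has a unique most specific applicable branch. -/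
theorem unique_most_specific_branch {α : Type*} [PartialOrder α]
    (hSI : SingleInheritance α) {n : ℕ} (O : Finset (Branch α n))
    (hcov : ∀ b₁ ∈ O, ∀ b₂ ∈ O, b₁.sig ≤ b₂.sig → b₁.ret ≤ b₂.ret)
    (hcomp : ∀ b₁ ∈ O, ∀ b₂ ∈ O, (∃ L, L ≤ b₁.sig ∧ L ≤ b₂.sig) →
      ∃ b ∈ O, MaximalLowerBound b.sig b₁.sig b₂.sig)
    (Cs : Fin n → α) (happ : ∃ b ∈ O, Cs ≤ b.sig) :
    ∃! b, b ∈ O ∧ Cs ≤ b.sig ∧ ∀ b' ∈ O, Cs ≤ b'.sig → b.sig ≤ b'.sig := by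
  obtain ⟨b, hb⟩ := Branch.exists_minimalFor_applicable happ
  obtain ⟨hbO, hbC⟩ := hb.1
  have hmost : ∀ b' ∈ O, Cs ≤ b'.sig → b.sig ≤ b'.sig := fun _ =>
    Branch.sig_le_of_minimalFor_applicable hSI hcomp hb
  refine ⟨b, ⟨hbO, hbC, hmost⟩, fun b' ⟨hb'O, hb'C, hb'most⟩ => ?_⟩
  exact Branch.eq_of_sig_eq hcov hb'O hbO (le_antisymm (hb'most b hbO hbC) (hmost b' hb'O hb'C))
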